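/- With notation as above, the largest part of the ℓ-core λ = π(a₁,...,a_ℓ) also equals Σ_{j=1}^{i−1} (a_i − a_j) + Σ_{j=i+1}^{ℓ} (a_i − a_j − 1), where a_i is the rightmost occurrence of the maximum coordinate. -/

import Mathlib

/-!
λ₁ is the number of gaps below the largest beta-number, a count that is unchanged by the shift
relating the beta-set to the flush abacus. The largest bead sits on runner `i` at level `a i`, and
the positions up to it are exactly the beads of the staircase abacus with level `a i` on runners
`j ≤ i` and `a i - 1` on runners `j > i`; so runner `j` carries `a i - a j` gaps below it for
`j ≤ i` and `a i - 1 - a j` for `j > i`.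
-/

/-- A partition: a weakly decreasing list of positive integers. -/
def IsPartition (l : List ℕ) : Prop := l.Pairwise (· ≥ ·) ∧ ∀ x ∈ l, 0 < x

/-- Hook length of the box in (0-based) row `a` and (1-based) column `c`. -/
def hook (l : List ℕ) (a c : ℕ) : ℕ :=
  (l.getD a 0 - c) + ((List.range l.length).filter (fun i => decide (a < i ∧ c ≤ l.getD i 0))).length + 1

/-- `l` is an `ℓ`-core: no box has hook length divisible by `ℓ`. -/
def IsCore (ℓ : ℕ) (l : List ℕ) : Prop :=
  ∀ a < l.length, ∀ c, 1 ≤ c → c ≤ l.getD a 0 → ¬ (ℓ ∣ hook l a c)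

/-- First-column hook lengths of `l` (the beta-numbers). -/
def betaList (l : List ℕ) : List ℕ := (List.range l.length).map (fun a => hook l a 1)

/-- Bead positions of the flush abacus with ℓ runners whose largest bead level on
runner i is `a i`. -/
def Beads (ℓ : ℕ) (a : Fin ℓ → ℤ) : Set ℤ :=
  {x | ∃ i : Fin ℓ, ∃ r : ℤ, r ≤ a i ∧ x = r * ℓ + (i : ℤ)}

/-- The (doubly infinite) beta-number set of a partition: its first-column hook
lengths together with all negative integers. -/
def BetaSet (l : List ℕ) : Set ℤ :=
  {x | (∃ a < l.length, x = (hook l a 1 : ℤ)) ∨ x < 0}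

/-- The abacus determined by `a` represents the partition `l`
(up to the normalizing shift `s`). -/
def Corresponds (ℓ : ℕ) (a : Fin ℓ → ℤ) (l : List ℕ) : Prop :=
  ∃ s : ℤ, Beads ℓ a = (fun x => x + s) '' BetaSet l

open Set

lemma ncard_Iic_add_sdiff_image_add {α : Type*} [AddCommGroup α] [PartialOrder α]
    [IsOrderedAddMonoid α] (S : Set α) (m s : α) :
    (Iic (m + s) \ (· + s) '' S).ncard = (Iic m \ S).ncard := by
  rw [← image_add_const_Iic, ← image_sdiff (add_left_injective s),
    ncard_image_of_injective _ (add_left_injective s)]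

section Abacus

variable {ℓ : ℕ}

def abacusPos (ℓ : ℕ) (p : (_ : Fin ℓ) × ℤ) : ℤ := p.2 * ℓ + p.1

lemma abacusPos_injective : Function.Injective (abacusPos ℓ) := by
  rintro ⟨j, r⟩ ⟨j', r'⟩ h
  simp only [abacusPos] at h
  have hj := j.isLt
  have hj' := j'.isLt
  have hr : r = r' := by
    rcases lt_trichotomy r r' with hlt | heq | hgt
    · nlinarith
    · exact heq
    · nlinarith
  subst hr
  simp only [Sigma.mk.injEq, heq_eq_eq, and_true]
  exact Fin.ext (by omega)

lemma abacusPos_surjective (hℓ : 0 < ℓ) : Function.Surjective (abacusPos ℓ) := by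
  intro x
  have hmod := Int.emod_nonneg x (Int.natCast_ne_zero.mpr hℓ.ne')
  have hlt := Int.emod_lt_of_pos x (Int.natCast_pos.mpr hℓ)
  refine ⟨⟨⟨(x % ℓ).toNat, by omega⟩, x / ℓ⟩, ?_⟩
  simp only [abacusPos, Int.toNat_of_nonneg hmod]
  exact Int.ediv_mul_add_emod x ℓ

lemma beads_eq_image (a : Fin ℓ → ℤ) : Beads ℓ a = abacusPos ℓ '' {p | p.2 ≤ a p.1} := by
  ext x
  constructor
  · rintro ⟨j, r, hr, rfl⟩
    exact ⟨⟨j, r⟩, hr, rfl⟩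
  · rintro ⟨⟨j, r⟩, hr, rfl⟩
    exact ⟨j, r, hr, rfl⟩

lemma beads_mono {a b : Fin ℓ → ℤ} (hab : a ≤ b) : Beads ℓ a ⊆ Beads ℓ b := by
  rintro _ ⟨j, r, hr, rfl⟩
  exact ⟨j, r, hr.trans (hab j), rfl⟩

lemma ncard_beads_sdiff (a b : Fin ℓ → ℤ) :
    (Beads ℓ b \ Beads ℓ a).ncard = ∑ j, (b j - a j).toNat := by
  have hlevels : {p : (_ : Fin ℓ) × ℤ | p.2 ≤ b p.1} \ {p | p.2 ≤ a p.1} =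
      ↑(Finset.univ.sigma fun j => Finset.Ioc (a j) (b j)) := by
    ext ⟨j, r⟩
    simp [and_comm]
  rw [beads_eq_image, beads_eq_image, ← image_sdiff abacusPos_injective, hlevels,
    ncard_image_of_injective _ abacusPos_injective, ncard_coe_finset, Finset.card_sigma]
  simp only [Int.card_Ioc]

def staircase (c : ℤ) (i : Fin ℓ) : Fin ℓ → ℤ := fun j => if j ≤ i then c else c - 1

lemma le_staircase_iff {c r : ℤ} {i j : Fin ℓ} :
    r ≤ staircase c i j ↔ r * ℓ + j ≤ c * ℓ + i := by
  have hj := j.isLt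
  have hi := i.isLt
  unfold staircase
  split_ifs with hji
  · have : (j : ℤ) ≤ i := by exact_mod_cast hji
    constructor
    · intro h; nlinarith
    · intro h; by_contra! h'; nlinarith
  · have : (i : ℤ) < j := by exact_mod_cast not_le.mp hji
    constructor
    · intro h; nlinarith
    · intro h; by_contra! h'; nlinarith

lemma beads_staircase (c : ℤ) (i : Fin ℓ) : Beads ℓ (staircase c i) = Iic (c * ℓ + i) := by
  rw [beads_eq_image, ← image_preimage_eq (Iic _) (abacusPos_surjective (i.pos))]
  congr 1
  ext ⟨j, r⟩
  exact le_staircase_iff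

variable {a : Fin ℓ → ℤ} {i : Fin ℓ}

lemma le_staircase (hmax : ∀ j, a j ≤ a i) (hright : ∀ j, i < j → a j < a i) :
    a ≤ staircase (a i) i := by
  intro j
  unfold staircase
  split_ifs with hji
  · exact hmax j
  · linarith [hright j (not_le.mp hji)]

lemma isGreatest_beads (hmax : ∀ j, a j ≤ a i) (hright : ∀ j, i < j → a j < a i) :
    IsGreatest (Beads ℓ a) (a i * ℓ + i) :=
  ⟨⟨i, a i, le_rfl, rfl⟩, fun _ hx => by
    simpa only [beads_staircase, mem_Iic] using beads_mono (le_staircase hmax hright) hx⟩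

lemma ncard_gaps_beads (hmax : ∀ j, a j ≤ a i) (hright : ∀ j, i < j → a j < a i) :
    ((Iic (a i * ℓ + i) \ Beads ℓ a).ncard : ℤ) =
      (∑ j ∈ Finset.univ.filter (fun j => j < i), (a i - a j)) +
      (∑ j ∈ Finset.univ.filter (fun j => i < j), (a i - a j - 1)) := by
  rw [← beads_staircase, ncard_beads_sdiff]
  have hnonneg : ∀ j, 0 ≤ staircase (a i) i j - a j := fun j =>
    sub_nonneg.mpr (le_staircase hmax hright j)
  push_cast [Int.toNat_of_nonneg (hnonneg _)]
  have hsplit : Finset.univ.filter (fun j => ¬ j < i) =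
      insert i (Finset.univ.filter fun j => i < j) := by
    ext j
    simp [le_iff_eq_or_lt, eq_comm]
  rw [← Finset.sum_filter_add_sum_filter_not _ (· < i), hsplit, Finset.sum_insert (by simp)]
  unfold staircase
  congr 1
  · refine Finset.sum_congr rfl fun j hj => ?_
    rw [if_pos (Finset.mem_filter.mp hj).2.le]
  · rw [if_pos le_rfl, sub_self, zero_add]
    refine Finset.sum_congr rfl fun j hj => ?_
    rw [if_neg (Finset.mem_filter.mp hj).2.not_ge, sub_right_comm]

end Abacus

section Partition

variable {l : List ℕ}

lemma length_filter_range_lt (n a : ℕ) :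
    ((List.range n).filter fun i => decide (a < i)).length = n - (a + 1) := by
  induction n with
  | zero => simp
  | succ n ih =>
    rw [List.range_succ, List.filter_append, List.length_append, ih]
    by_cases h : a < n <;> simp [h] <;> omega

lemma IsPartition.getD_pos (hp : IsPartition l) {a : ℕ} (ha : a < l.length) : 0 < l.getD a 0 := by
  rw [List.getD_eq_getElem _ _ ha]
  exact hp.2 _ (List.getElem_mem ha)

lemma IsPartition.getD_antitone (hp : IsPartition l) {a b : ℕ} (hab : a ≤ b) (hb : b < l.length) :
    l.getD b 0 ≤ l.getD a 0 := by
  have ha := hab.trans_lt hb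
  rw [List.getD_eq_getElem _ _ ha, List.getD_eq_getElem _ _ hb]
  rcases hab.eq_or_lt with rfl | hlt
  · exact le_rfl
  · exact List.pairwise_iff_getElem.mp hp.1 a b ha hb hlt

lemma IsPartition.hook_one_eq (hp : IsPartition l) {a : ℕ} (ha : a < l.length) :
    hook l a 1 = l.getD a 0 + (l.length - 1 - a) := by
  have hrows : (List.range l.length).filter (fun i => decide (a < i ∧ 1 ≤ l.getD i 0)) =
      (List.range l.length).filter (fun i => decide (a < i)) :=
    List.filter_congr fun i hi => by
      simp only [decide_eq_decide, and_iff_left_iff_imp]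
      exact fun _ => hp.getD_pos (List.mem_range.mp hi)
  rw [hook, hrows, length_filter_range_lt]
  have := hp.getD_pos ha
  omega

lemma IsPartition.hook_one_strictAntiOn (hp : IsPartition l) :
    StrictAntiOn (fun a => hook l a 1) (Iio l.length) := by
  intro a ha b hb hab
  simp only [mem_Iio] at ha hb
  simp only [hp.hook_one_eq ha, hp.hook_one_eq hb]
  have := hp.getD_antitone hab.le hb
  omega

def betaFinset (l : List ℕ) : Finset ℤ := (Finset.range l.length).image fun a => (hook l a 1 : ℤ)

lemma betaSet_eq (l : List ℕ) : BetaSet l = ↑(betaFinset l) ∪ Iio 0 := by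
  ext x
  simp [BetaSet, betaFinset, eq_comm]

lemma IsPartition.card_betaFinset (hp : IsPartition l) : (betaFinset l).card = l.length := by
  rw [betaFinset, Finset.card_image_of_injOn, Finset.card_range]
  intro a ha b hb hab
  simp only [Finset.coe_range] at ha hb
  exact hp.hook_one_strictAntiOn.injOn ha hb (by simpa using hab)

lemma IsPartition.isGreatest_betaSet (hp : IsPartition l) (hl : l ≠ []) :
    IsGreatest (BetaSet l) (hook l 0 1) := by
  have h0 : 0 < l.length := List.length_pos_iff.mpr hl
  refine ⟨Or.inl ⟨0, h0, rfl⟩, ?_⟩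
  rintro x (⟨a, ha, rfl⟩ | hx)
  · exact_mod_cast hp.hook_one_strictAntiOn.antitoneOn (mem_Iio.mpr h0) (mem_Iio.mpr ha)
      (Nat.zero_le a)
  · exact hx.le.trans (Int.natCast_nonneg _)

lemma IsPartition.ncard_gaps_betaSet (hp : IsPartition l) {m : ℤ} (hm : IsGreatest (BetaSet l) m) :
    (Iic m \ BetaSet l).ncard = l.headD 0 := by
  rcases l with _ | ⟨x, xs⟩
  · have hneg : m < 0 := by simpa [BetaSet] using hm.1
    have hempty : Iic m \ BetaSet [] = ∅ := by
      ext y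
      simp only [BetaSet, mem_sdiff, mem_Iic, mem_ofPred_eq, mem_empty_iff_false, iff_false]
      omega
    simp [hempty]
  · set l := x :: xs
    have hm0 : m = hook l 0 1 := hm.unique (hp.isGreatest_betaSet (List.cons_ne_nil x xs))
    have hgaps : Iic m \ BetaSet l = ↑(Finset.Icc 0 m \ betaFinset l) := by
      ext y
      simp only [betaSet_eq, mem_sdiff, mem_Iic, mem_union, Finset.mem_coe, Finset.mem_sdiff,
        Finset.mem_Icc, mem_Iio, not_or, not_lt]
      tauto
    have hsub : betaFinset l ⊆ Finset.Icc 0 m := fun y hy => by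
      have := hm.2 (by rw [betaSet_eq]; exact Or.inl hy)
      simp only [betaFinset, Finset.mem_image] at hy
      obtain ⟨a, -, rfl⟩ := hy
      exact Finset.mem_Icc.mpr ⟨Int.natCast_nonneg _, this⟩
    rw [hgaps, ncard_coe_finset, Finset.card_sdiff_of_subset hsub, hp.card_betaFinset, Int.card_Icc,
      hm0, hp.hook_one_eq (List.length_pos_iff.mpr (List.cons_ne_nil x xs))]
    simp only [l, List.getD_cons_zero, List.length_cons, List.headD_cons]
    omega

end Partition

theorem stmt8_general (ℓ : ℕ) (a : Fin ℓ → ℤ)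
    (l : List ℕ) (hp : IsPartition l) (hcor : Corresponds ℓ a l)
    (i : Fin ℓ) (hmax : ∀ j, a j ≤ a i) (hright : ∀ j, i < j → a j < a i) :
    (l.headD 0 : ℤ) =
      (∑ j ∈ Finset.univ.filter (fun j => j < i), (a i - a j)) +
      (∑ j ∈ Finset.univ.filter (fun j => i < j), (a i - a j - 1)) := by
  obtain ⟨s, hs⟩ := hcor
  set M : ℤ := a i * ℓ + i
  have hM : IsGreatest (BetaSet l) (M - s) := by
    have hshift : StrictMono (· + s) := fun _ _ h ↦ add_lt_add_left h s
    rw [← hshift.map_isGreatest, sub_add_cancel, ← hs]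
    exact isGreatest_beads hmax hright
  calc (l.headD 0 : ℤ) = (Iic (M - s) \ BetaSet l).ncard := by rw [hp.ncard_gaps_betaSet hM]
    _ = (Iic M \ Beads ℓ a).ncard := by
      rw [hs, ← ncard_Iic_add_sdiff_image_add _ _ s, sub_add_cancel]
    _ = _ := ncard_gaps_beads hmax hright

/-- λ₁ = Σ_{j<i} (a_i - a_j) + Σ_{j>i} (a_i - a_j - 1), where a_i is the rightmost
maximum coordinate of the balanced flush abacus vector of the ℓ-core l. -/
theorem stmt8 (ℓ : ℕ) (hℓ : 2 ≤ ℓ) (a : Fin ℓ → ℤ) (ha : ∑ i, a i = 0)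
    (l : List ℕ) (hp : IsPartition l) (hc : IsCore ℓ l) (hcor : Corresponds ℓ a l)
    (i : Fin ℓ) (hmax : ∀ j, a j ≤ a i) (hright : ∀ j, i < j → a j < a i) :
    (l.headD 0 : ℤ) =
      (∑ j ∈ Finset.univ.filter (fun j => j < i), (a i - a j)) +
      (∑ j ∈ Finset.univ.filter (fun j => i < j), (a i - a j - 1)) :=
  stmt8_general ℓ a l hp hcor i hmax hright
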